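/- Let X be a Markov chain with finite state space S, let x, y ∈ S, and let U ⊆ S be a subset such that, started from x, the chain almost surely cannot reach U without first visiting y (i.e., P_x(τ(U) < τ(y)) = 0). For s ≥ 0 let Z_s denote the number of states of U visited by the chain during times 0, 1, …, s. Then for any integers t > 0 and N > 0, there exists an integer s with t ≤ s < t + 2N such that P_x(S_s) ≥ P_x(t ≤ τ(y) < t + N) · E_y[Z_N] / (2N), where E_y denotes expectation for the chain started at y. -/

import Mathlib

open Finset

/-- A (row-)stochastic transition matrix: the transition kernel of a Markov chain
on the finite state space `S`. -/
def IsStochastic {S : Type*} [Fintype S] (p : Matrix S S ℝ) : Prop :=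
  (∀ a b, 0 ≤ p a b) ∧ ∀ a, ∑ b, p a b = 1

/-- The probability weight of a finite trajectory `z 0, z 1, …, z m` of the chain. -/
noncomputable def pathWeight {S : Type*} (p : Matrix S S ℝ) {m : ℕ} (z : Fin (m + 1) → S) : ℝ :=
  ∏ i : Fin m, p (z i.castSucc) (z i.succ)

open scoped Classical in
/-- `P_x(A)` for an event `A` depending on the trajectory `X_0, X_1, …, X_m`
of the chain started at `x`. -/
noncomputable def eventProb {S : Type*} [Fintype S] (p : Matrix S S ℝ) (x : S) (m : ℕ)
    (A : (Fin (m + 1) → S) → Prop) : ℝ :=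
  ∑ z : Fin (m + 1) → S, if z 0 = x ∧ A z then pathWeight p z else 0

/-- `P_x(τ(y) = t)`: the probability that the chain started at `x` first visits `y`
exactly at time `t`. -/
noncomputable def hitProbEq {S : Type*} [Fintype S] (p : Matrix S S ℝ) (x y : S) (t : ℕ) : ℝ :=
  eventProb p x t fun z => z (Fin.last t) = y ∧ ∀ i : Fin (t + 1), (i : ℕ) < t → z i ≠ y

/-- `P_x(S_t)`: the probability that the state visited at time `t` was not visited
at any earlier time. -/
noncomputable def surpriseProb {S : Type*} [Fintype S] (p : Matrix S S ℝ) (x : S) (t : ℕ) : ℝ :=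
  eventProb p x t fun z => ∀ i : Fin (t + 1), (i : ℕ) < t → z i ≠ z (Fin.last t)

/-!
Split `{t ≤ τ(y) < t + N}` according to the value `k` of `τ(y)`. By the Markov property at time
`k`, `P_x(τ(y) = k) · P_y(u is visited by time N)` is the probability that `τ(y) = k` and `u` is
visited during `[k, k + N]`. Since `U` cannot be reached before `y`, the first visit to `u ∈ U`
then happens at some time `s ∈ [k, k + N] ⊆ [t, t + 2N)`, and `S_s` occurs. For fixed `s` these
events are disjoint in `(k, u)` (`k = τ(y)` and `u = X_s`), so summing over `k` and `u` gives
`P_x(t ≤ τ(y) < t + N) · E_y[Z_N] ≤ ∑_{t ≤ s < t + 2N} P_x(S_s)`, and one of these `2N` terms is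
at least their average.
-/

lemma Finset.exists_div_card_le_of_le_sum {ι : Type*} {s : Finset ι} (hs : s.Nonempty) {c : ℝ}
    {f : ι → ℝ} (h : c ≤ ∑ i ∈ s, f i) : ∃ i ∈ s, c / #s ≤ f i :=
  exists_le_of_sum_le hs <| by
    rwa [sum_const, nsmul_eq_mul, mul_div_cancel₀ _ (Nat.cast_ne_zero.2 hs.card_pos.ne')]

section Paths
variable {S : Type*} [Fintype S] {p : Matrix S S ℝ}

lemma pathWeight_nonneg (hp : IsStochastic p) {m : ℕ} (z : Fin (m + 1) → S) :
    0 ≤ pathWeight p z :=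
  prod_nonneg fun _ _ => hp.1 _ _

omit [Fintype S] in
lemma pathWeight_cons {m : ℕ} (x : S) (w : Fin (m + 1) → S) :
    pathWeight p (Fin.cons x w : Fin (m + 2) → S) = p x (w 0) * pathWeight p w := by
  simp [pathWeight, Fin.prod_univ_succ]

open scoped Classical in
lemma eventProb_succ (x : S) (m : ℕ) (A : (Fin (m + 2) → S) → Prop) :
    eventProb p x (m + 1) A = ∑ s, p x s * eventProb p s m (fun w => A (Fin.cons x w)) := by
  simp only [eventProb, mul_sum]
  rw [← (Fin.consEquiv fun _ => S).sum_comp, Fintype.sum_prod_type, sum_comm, sum_comm (γ := S)]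
  simp [Fin.consEquiv, pathWeight_cons, ite_and]

end Paths

def extendPath {S : Type*} {m : ℕ} (z : Fin (m + 1) → S) (i : ℕ) : S :=
  z ⟨min i m, by omega⟩

def seqCons {S : Type*} (x : S) (ω : ℕ → S) : ℕ → S
  | 0 => x
  | i + 1 => ω i

/-- `P_x(A)` for an event `A` on infinite trajectories, evaluated on the trajectories up to time
`m`, extended by their state at time `m`. It does not depend on `m ≥ a` when `A` is determined by
the times `≤ a` (`trajProb_of_le`). -/
noncomputable def trajProb {S : Type*} [Fintype S] (p : Matrix S S ℝ) (x : S) (m : ℕ)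
    (A : (ℕ → S) → Prop) : ℝ :=
  eventProb p x m fun z => A (extendPath z)

def DeterminedUpTo {S : Type*} (m : ℕ) (A : (ℕ → S) → Prop) : Prop :=
  ∀ ω ω' : ℕ → S, (∀ i ≤ m, ω i = ω' i) → (A ω ↔ A ω')

section Sequences
variable {S : Type*} {m : ℕ}

lemma extendPath_of_lt (z : Fin (m + 1) → S) {i : ℕ} (h : i < m + 1) :
    extendPath z i = z ⟨i, h⟩ :=
  congrArg z (Fin.ext (min_eq_left (by omega)))

lemma extendPath_last (z : Fin (m + 1) → S) : extendPath z m = z (Fin.last m) :=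
  extendPath_of_lt z (Nat.lt_succ_self m)

@[simp]
lemma seqCons_succ (x : S) (ω : ℕ → S) (i : ℕ) : seqCons x ω (i + 1) = ω i := rfl

lemma extendPath_cons (x : S) (w : Fin (m + 1) → S) :
    extendPath (Fin.cons x w : Fin (m + 2) → S) = seqCons x (extendPath w) := by
  funext i
  cases i with
  | zero => rfl
  | succ i =>
    rw [extendPath, seqCons, extendPath,
      show (⟨min (i + 1) (m + 1), _⟩ : Fin (m + 2)) = (⟨min i m, by omega⟩ : Fin (m + 1)).succ from
        Fin.ext (Nat.succ_min_succ i m), Fin.cons_succ]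

lemma DeterminedUpTo.iff_const {A : (ℕ → S) → Prop} (hA : DeterminedUpTo 0 A) (ω : ℕ → S) :
    A ω ↔ A fun _ => ω 0 :=
  hA _ _ fun i hi => by rw [Nat.le_zero.mp hi]

lemma DeterminedUpTo.comp_seqCons {A : (ℕ → S) → Prop} (hA : DeterminedUpTo (m + 1) A) (x : S) :
    DeterminedUpTo m fun ω => A (seqCons x ω) := by
  intro ω ω' h
  refine hA _ _ fun i hi => ?_
  cases i with
  | zero => rfl
  | succ i => exact h i (by omega)

end Sequences

section TrajProb
open scoped Classical
variable {S : Type*} [Fintype S] {p : Matrix S S ℝ} {x : S} {m : ℕ} {A B : (ℕ → S) → Prop}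

lemma trajProb_eq_eventProb {A' : (Fin (m + 1) → S) → Prop} (h : ∀ z, A (extendPath z) ↔ A' z) :
    trajProb p x m A = eventProb p x m A' :=
  congrArg (eventProb p x m) (funext fun z => propext (h z))

lemma trajProb_congr (h : ∀ ω, ω 0 = x → (A ω ↔ B ω)) : trajProb p x m A = trajProb p x m B :=
  sum_congr rfl fun z _ => by
    by_cases hz : z 0 = x
    · simp only [hz, h (extendPath z) hz, true_and]
    · simp only [hz, false_and, if_false]

lemma trajProb_nonneg (hp : IsStochastic p) : 0 ≤ trajProb p x m A :=
  sum_nonneg fun z _ => ite_nonneg (pathWeight_nonneg hp z) le_rfl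

lemma trajProb_le_sum (hp : IsStochastic p) {ι : Type*} {F : Finset ι} {B : ι → (ℕ → S) → Prop}
    (h : ∀ ω, ω 0 = x → A ω → ∃ j ∈ F, B j ω) :
    trajProb p x m A ≤ ∑ j ∈ F, trajProb p x m (B j) := by
  unfold trajProb eventProb
  rw [sum_comm]
  refine sum_le_sum fun z _ => ?_
  split_ifs with hz
  · obtain ⟨j, hj, hB⟩ := h (extendPath z) hz.1 hz.2
    calc pathWeight p z
        = if z 0 = x ∧ B j (extendPath z) then pathWeight p z else 0 := (if_pos ⟨hz.1, hB⟩).symm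
      _ ≤ _ := single_le_sum (f := fun j => if z 0 = x ∧ B j (extendPath z) then pathWeight p z else 0)
          (fun j _ => ite_nonneg (pathWeight_nonneg hp z) le_rfl) hj
  · exact sum_nonneg fun j _ => ite_nonneg (pathWeight_nonneg hp z) le_rfl

lemma trajProb_le_add (hp : IsStochastic p) {C : (ℕ → S) → Prop}
    (h : ∀ ω, ω 0 = x → A ω → B ω ∨ C ω) :
    trajProb p x m A ≤ trajProb p x m B + trajProb p x m C := by
  simpa using trajProb_le_sum hp (F := univ) (B := fun b : Bool => if b then B else C)
    fun ω h0 hA => by simpa using (h ω h0 hA).symm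

lemma trajProb_sum_le (hp : IsStochastic p) {ι : Type*} {F : Finset ι} {B : ι → (ℕ → S) → Prop}
    (hsub : ∀ j ∈ F, ∀ ω, B j ω → A ω)
    (hdisj : ∀ ω, ∀ j ∈ F, ∀ j' ∈ F, B j ω → B j' ω → j = j') :
    ∑ j ∈ F, trajProb p x m (B j) ≤ trajProb p x m A := by
  unfold trajProb eventProb
  rw [sum_comm]
  refine sum_le_sum fun z _ => ?_
  by_cases hz : ∃ j ∈ F, z 0 = x ∧ B j (extendPath z)
  · obtain ⟨j, hj, h0, hB⟩ := hz
    rw [sum_eq_single_of_mem j hj fun j' hj' hne => if_neg fun h' => hne (hdisj _ _ hj' _ hj h'.2 hB),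
      if_pos ⟨h0, hB⟩, if_pos ⟨h0, hsub j hj _ hB⟩]
  · push Not at hz
    rw [sum_eq_zero fun j hj => if_neg fun h' => hz j hj h'.1 h'.2]
    exact ite_nonneg (pathWeight_nonneg hp z) le_rfl

lemma trajProb_zero (x : S) (A : (ℕ → S) → Prop) :
    trajProb p x 0 A = if A (fun _ => x) then 1 else 0 := by
  unfold trajProb eventProb
  rw [Fintype.sum_eq_single (fun _ => x : Fin 1 → S)
    fun z hz => if_neg fun h => hz (funext fun i => Subsingleton.elim i 0 ▸ h.1)]
  simp [pathWeight]
  rfl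

lemma trajProb_false (x : S) (m : ℕ) : trajProb p x m (fun _ => False) = 0 := by
  simp [trajProb, eventProb]

lemma trajProb_succ (x : S) (m : ℕ) (A : (ℕ → S) → Prop) :
    trajProb p x (m + 1) A = ∑ s, p x s * trajProb p s m (fun ω => A (seqCons x ω)) := by
  simp only [trajProb, eventProb_succ, extendPath_cons]

lemma trajProb_true (hp : IsStochastic p) (x : S) (m : ℕ) :
    trajProb p x m (fun _ => True) = 1 := by
  induction m generalizing x with
  | zero => simp [trajProb_zero]
  | succ m ih => simp [trajProb_succ, ih, hp.2]

lemma trajProb_of_le (hp : IsStochastic p) {a : ℕ} (hA : DeterminedUpTo a A) (ha : a ≤ m) :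
    trajProb p x m A = trajProb p x a A := by
  induction a generalizing x m A with
  | zero =>
    have hconst : ∀ {n}, trajProb p x n A = trajProb p x n fun _ => A fun _ => x :=
      trajProb_congr fun ω h0 => h0 ▸ hA.iff_const ω
    rw [hconst, hconst]
    by_cases hx : A fun _ => x <;> simp [hx, trajProb_true hp, trajProb_false]
  | succ a ih =>
    obtain ⟨m, rfl⟩ : ∃ n, m = n + 1 := ⟨m - 1, by omega⟩
    simp only [trajProb_succ, ih (hA.comp_seqCons x) (Nat.le_of_succ_le_succ ha)]

theorem trajProb_markov {a b : ℕ} (hA : DeterminedUpTo a A) (y : S) (B : (ℕ → S) → Prop) :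
    trajProb p x a (fun ω => A ω ∧ ω a = y) * trajProb p y b B
      = trajProb p x (a + b) (fun ω => A ω ∧ ω a = y ∧ B fun i => ω (a + i)) := by
  induction a generalizing x A with
  | zero =>
    rw [trajProb_zero, zero_add]
    simp only [zero_add]
    by_cases hxy : (A fun _ => x) ∧ x = y
    · obtain ⟨hx, rfl⟩ := hxy
      rw [if_pos ⟨hx, rfl⟩, one_mul]
      exact trajProb_congr fun ω h0 => by simp [h0, (h0 ▸ hA.iff_const ω).2 hx]
    · rw [if_neg hxy, zero_mul, ← trajProb_false x b]
      refine trajProb_congr fun ω h0 => ?_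
      simp only [h0 ▸ hA.iff_const ω, h0]
      tauto
  | succ a ih =>
    rw [Nat.add_right_comm a 1 b, trajProb_succ, trajProb_succ, sum_mul]
    refine sum_congr rfl fun s _ => ?_
    have hshift : ∀ ω : ℕ → S, (fun i => seqCons x ω (a + 1 + i)) = fun i => ω (a + i) :=
      fun ω => funext fun i => by rw [Nat.add_right_comm]; rfl
    simp only [seqCons_succ, hshift]
    rw [mul_assoc, ih (hA.comp_seqCons x)]

end TrajProb

def HitsFirstAt {S : Type*} (y : S) (k : ℕ) (ω : ℕ → S) : Prop :=
  (∀ i < k, ω i ≠ y) ∧ ω k = y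

def IsNewAt {S : Type*} (s : ℕ) (ω : ℕ → S) : Prop :=
  ∀ i < s, ω i ≠ ω s

section Hitting
variable {S : Type*} {ω : ℕ → S} {y : S} {k : ℕ}

lemma HitsFirstAt.unique {k' : ℕ} (h : HitsFirstAt y k ω) (h' : HitsFirstAt y k' ω) : k = k' := by
  by_contra hne
  rcases Nat.lt_or_gt_of_ne hne with hlt | hlt
  · exact h'.1 k hlt h.2
  · exact h.1 k' hlt h'.2

lemma exists_hitsFirstAt_le {r : ℕ} (hr : ω r = y) : ∃ k ≤ r, HitsFirstAt y k ω := by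
  classical
  have hex : ∃ n, ω n = y := ⟨r, hr⟩
  exact ⟨Nat.find hex, Nat.find_min' hex hr, fun i hi => Nat.find_min hex hi, Nat.find_spec hex⟩

lemma determinedUpTo_hitsFirstAt : DeterminedUpTo k (HitsFirstAt y k) := fun ω ω' h => by
  simp only [HitsFirstAt, h k le_rfl]
  exact and_congr (forall₂_congr fun i hi => by rw [h i hi.le]) Iff.rfl

lemma determinedUpTo_isNewAt (s : ℕ) : DeterminedUpTo s (IsNewAt (S := S) s) := fun ω ω' h => by
  simp only [IsNewAt, h s le_rfl]
  exact forall₂_congr fun i hi => by rw [h i hi.le]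

end Hitting

section Surprise
variable {S : Type*} [Fintype S] {p : Matrix S S ℝ} {x y : S} {U : Finset S}

lemma trajProb_visit_before_hit_eq_zero (hp : IsStochastic p)
    (hblock : ∀ r, trajProb p x r (fun ω => ω r ∈ U ∧ ∀ i ≤ r, ω i ≠ y) = 0) {k M : ℕ}
    (hkM : k ≤ M) :
    trajProb p x M (fun ω => ∃ r < k, ω r ∈ U ∧ ∀ i ≤ r, ω i ≠ y) = 0 := by
  refine le_antisymm ?_ (trajProb_nonneg hp)
  calc _ ≤ ∑ r ∈ range k, trajProb p x M (fun ω => ω r ∈ U ∧ ∀ i ≤ r, ω i ≠ y) :=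
        trajProb_le_sum hp fun ω _ ⟨r, hr, hω⟩ => ⟨r, mem_range.2 hr, hω⟩
    _ = 0 := sum_eq_zero fun r hr => by
        rw [trajProb_of_le hp (a := r) (fun ω ω' h => by grind) (by grind), hblock r]

lemma hitsFirstAt_mul_visit_le (hp : IsStochastic p)
    (hblock : ∀ r, trajProb p x r (fun ω => ω r ∈ U ∧ ∀ i ≤ r, ω i ≠ y) = 0) {u : S} (hu : u ∈ U)
    {k N M : ℕ} (hM : k + N ≤ M) :
    trajProb p x k (HitsFirstAt y k) * trajProb p y N (fun ω => ∃ r ≤ N, ω r = u)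
      ≤ ∑ s ∈ Icc k (k + N), trajProb p x M (fun ω => HitsFirstAt y k ω ∧ HitsFirstAt u s ω) := by
  calc _ = trajProb p x (k + N) (fun ω => (∀ i < k, ω i ≠ y) ∧ ω k = y ∧ ∃ r ≤ N, ω (k + r) = u) :=
        trajProb_markov (fun ω ω' h => by grind) y _
    _ = trajProb p x M (fun ω => (∀ i < k, ω i ≠ y) ∧ ω k = y ∧ ∃ r ≤ N, ω (k + r) = u) :=
        (trajProb_of_le hp (fun ω ω' h => by grind) hM).symm
    -- The first visit to `u` precedes `τ(y)` only on a null event.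
    _ ≤ trajProb p x M (fun ω => ∃ r < k, ω r ∈ U ∧ ∀ i ≤ r, ω i ≠ y)
        + trajProb p x M (fun ω => ∃ s ∈ Icc k (k + N), HitsFirstAt y k ω ∧ HitsFirstAt u s ω) := by
        refine trajProb_le_add hp fun ω _ ⟨hbef, hk, r, hr, hru⟩ => ?_
        obtain ⟨s, hs, hfirst⟩ := exists_hitsFirstAt_le hru
        by_cases hsk : s < k
        · exact Or.inl ⟨s, hsk, hfirst.2 ▸ hu, fun i hi => hbef i (by omega)⟩
        · exact Or.inr ⟨s, mem_Icc.2 ⟨by omega, by omega⟩, ⟨hbef, hk⟩, hfirst⟩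
    _ ≤ _ := by
        rw [trajProb_visit_before_hit_eq_zero hp hblock (by omega), zero_add]
        exact trajProb_le_sum hp fun ω _ h => h

lemma sum_hitsFirstAt_le_isNewAt (hp : IsStochastic p) (K : Finset ℕ) (U : Finset S) (s M : ℕ) :
    ∑ k ∈ K, ∑ u ∈ U, trajProb p x M (fun ω => HitsFirstAt y k ω ∧ HitsFirstAt u s ω)
      ≤ trajProb p x M (IsNewAt s) := by
  rw [← sum_product']
  refine trajProb_sum_le hp (fun _ _ ω h i hi => h.2.2 ▸ h.2.1 i hi) fun ω _ _ _ _ h h' => ?_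
  exact Prod.ext (h.1.unique h'.1) (h.2.2.symm.trans h'.2.2)

theorem sum_hitsFirstAt_mul_sum_visit_le (hp : IsStochastic p)
    (hblock : ∀ r, trajProb p x r (fun ω => ω r ∈ U ∧ ∀ i ≤ r, ω i ≠ y) = 0) (t N : ℕ) :
    (∑ k ∈ Ico t (t + N), trajProb p x k (HitsFirstAt y k))
        * ∑ u ∈ U, trajProb p y N (fun ω => ∃ r ≤ N, ω r = u)
      ≤ ∑ s ∈ Ico t (t + 2 * N), trajProb p x s (IsNewAt s) := by
  rw [sum_mul_sum]
  calc _ ≤ ∑ k ∈ Ico t (t + N), ∑ u ∈ U, ∑ s ∈ Ico t (t + 2 * N),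
          trajProb p x (t + 2 * N) (fun ω => HitsFirstAt y k ω ∧ HitsFirstAt u s ω) := by
        refine sum_le_sum fun k hk => sum_le_sum fun u hu => ?_
        rw [mem_Ico] at hk
        refine (hitsFirstAt_mul_visit_le hp hblock hu (M := t + 2 * N) (by omega)).trans ?_
        exact sum_le_sum_of_subset_of_nonneg (fun s hs => by grind) fun _ _ _ => trajProb_nonneg hp
    _ = ∑ s ∈ Ico t (t + 2 * N), ∑ k ∈ Ico t (t + N), ∑ u ∈ U,
          trajProb p x (t + 2 * N) (fun ω => HitsFirstAt y k ω ∧ HitsFirstAt u s ω) := by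
        rw [sum_congr rfl fun k _ => sum_comm, sum_comm]
    _ ≤ _ := sum_le_sum fun s hs => (sum_hitsFirstAt_le_isNewAt hp _ U s _).trans_eq
        (trajProb_of_le hp (determinedUpTo_isNewAt s) (by grind))

lemma trajProb_isNewAt_eq_surpriseProb (x : S) (s : ℕ) :
    trajProb p x s (IsNewAt s) = surpriseProb p x s :=
  trajProb_eq_eventProb fun z => by
    simp only [IsNewAt, Fin.forall_iff, extendPath_last]
    grind [extendPath_of_lt]

lemma eventProb_hitWindow_le (hp : IsStochastic p) (t : ℕ) {N : ℕ} (hN : 0 < N) :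
    eventProb p x (t + N - 1)
        (fun z => (∀ i : Fin (t + N - 1 + 1), (i : ℕ) < t → z i ≠ y) ∧
          ∃ i : Fin (t + N - 1 + 1), t ≤ (i : ℕ) ∧ z i = y)
      ≤ ∑ k ∈ Ico t (t + N), trajProb p x k (HitsFirstAt y k) := by
  rw [← trajProb_eq_eventProb (A := fun ω => (∀ i < t, ω i ≠ y) ∧ ∃ i, t ≤ i ∧ i < t + N ∧ ω i = y)
    fun z => by simp only [Fin.forall_iff, Fin.exists_iff]; grind [extendPath_of_lt]]
  refine (trajProb_le_sum hp fun ω _ ⟨hbef, i, hti, hi, hy⟩ => ?_).trans_eq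
    (sum_congr rfl fun k hk => trajProb_of_le hp determinedUpTo_hitsFirstAt (by grind))
  obtain ⟨k, hki, hk⟩ := exists_hitsFirstAt_le hy
  exact ⟨k, mem_Ico.2 ⟨not_lt.1 fun hkt => hbef k hkt hk.2, by omega⟩, hk⟩

lemma sum_pathWeight_mul_card_visited [DecidableEq S] (y : S) (U : Finset S) (N : ℕ) :
    ∑ z : Fin (N + 1) → S, (if z 0 = y then pathWeight p z else 0) *
      ((U.filter fun u => ∃ r : Fin (N + 1), z r = u).card : ℝ)
    = ∑ u ∈ U, trajProb p y N (fun ω => ∃ r ≤ N, ω r = u) := by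
  have hvisit : ∀ u (z : Fin (N + 1) → S),
      (∃ r ≤ N, extendPath z r = u) ↔ ∃ r : Fin (N + 1), z r = u := fun u z =>
    ⟨fun ⟨r, hr, h⟩ => ⟨⟨r, by omega⟩, (extendPath_of_lt z _).symm.trans h⟩,
      fun ⟨r, h⟩ => ⟨r, by omega, (extendPath_of_lt z r.isLt).trans h⟩⟩
  simp only [trajProb, eventProb, hvisit, card_filter, Nat.cast_sum, mul_sum]
  rw [sum_comm]
  refine sum_congr rfl fun z _ => sum_congr rfl fun u _ => ?_
  rw [Nat.cast_ite, Nat.cast_one, Nat.cast_zero, ite_zero_mul_ite_zero, mul_one]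

end Surprise

theorem general_surprise_lower_bound_general {S : Type*} [Fintype S] [DecidableEq S]
    (p : Matrix S S ℝ) (hp : IsStochastic p) (x y : S) (U : Finset S)
    (hblock : ∀ m : ℕ,
      eventProb p x m (fun z => z (Fin.last m) ∈ U ∧ ∀ i : Fin (m + 1), z i ≠ y) = 0)
    (t N : ℕ) (hN : 0 < N) :
    ∃ s : ℕ, t ≤ s ∧ s < t + 2 * N ∧
      eventProb p x (t + N - 1)
          (fun z => (∀ i : Fin (t + N - 1 + 1), (i : ℕ) < t → z i ≠ y) ∧
            ∃ i : Fin (t + N - 1 + 1), t ≤ (i : ℕ) ∧ z i = y) *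
        (∑ z : Fin (N + 1) → S, (if z 0 = y then pathWeight p z else 0) *
          ((U.filter fun u => ∃ r : Fin (N + 1), z r = u).card : ℝ)) / (2 * N) ≤
      surpriseProb p x s := by
  have hblock' : ∀ r, trajProb p x r (fun ω => ω r ∈ U ∧ ∀ i ≤ r, ω i ≠ y) = 0 := fun r =>
    (trajProb_eq_eventProb fun z => by
      simp only [Fin.forall_iff, extendPath_last]; grind [extendPath_of_lt]).trans (hblock r)
  rw [sum_pathWeight_mul_card_visited]
  have htotal := (mul_le_mul_of_nonneg_right (eventProb_hitWindow_le hp t hN)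
    (sum_nonneg fun _ _ => trajProb_nonneg hp)).trans
    (sum_hitsFirstAt_mul_sum_visit_le hp hblock' t N)
  simp only [trajProb_isNewAt_eq_surpriseProb] at htotal
  obtain ⟨s, hs, hle⟩ := exists_div_card_le_of_le_sum (nonempty_Ico.2 (by omega)) htotal
  rw [Nat.card_Ico, Nat.add_sub_cancel_left, Nat.cast_mul, Nat.cast_ofNat] at hle
  exact ⟨s, (mem_Ico.1 hs).1, (mem_Ico.1 hs).2, hle⟩

/-- Lemma 18: suppose the chain started at `x` cannot reach `U` without first visiting
`y`.  Writing `Z_s` for the number of states of `U` visited by time `s`, for any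
`t, N > 0` there is `s` with `t ≤ s < t + 2N` and
`P_x(S_s) ≥ P_x(t ≤ τ(y) < t + N) · E_y[Z_N] / (2N)`. -/
theorem general_surprise_lower_bound {S : Type*} [Fintype S] [DecidableEq S]
    (p : Matrix S S ℝ) (hp : IsStochastic p) (x y : S) (U : Finset S)
    (hblock : ∀ m : ℕ,
      eventProb p x m (fun z => z (Fin.last m) ∈ U ∧ ∀ i : Fin (m + 1), z i ≠ y) = 0)
    (t N : ℕ) (ht : 0 < t) (hN : 0 < N) :
    ∃ s : ℕ, t ≤ s ∧ s < t + 2 * N ∧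
      eventProb p x (t + N - 1)
          (fun z => (∀ i : Fin (t + N - 1 + 1), (i : ℕ) < t → z i ≠ y) ∧
            ∃ i : Fin (t + N - 1 + 1), t ≤ (i : ℕ) ∧ z i = y) *
        (∑ z : Fin (N + 1) → S, (if z 0 = y then pathWeight p z else 0) *
          ((U.filter fun u => ∃ r : Fin (N + 1), z r = u).card : ℝ)) / (2 * N) ≤
      surpriseProb p x s :=
  general_surprise_lower_bound_general p hp x y U hblock t N hN
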